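/- Let A ∈ ℝ^{m×n}, C ∈ ℝ^{p×n}, and H := max_{J∈S(A;C)} H_J where H_J := max_{y∈{Ax : C_J x ≤ 0}, ‖y‖≤1} min{‖x‖ : Ax = y, C_J x ≤ 0}. Then for all b ∈ ℝ^m, d ∈ ℝ^p such that {x : Ax = b, Cx ≤ d} is nonempty, and all u with Cu ≤ d, dist(u, {x : Ax = b, Cx ≤ d}) ≤ H · ‖Au − b‖. Moreover this bound is tight: if H > 0 then there exist b ∈ ℝ^m, d ∈ ℝ^p with {x : Ax = b, Cx ≤ d} nonempty and u with Cu ≤ d, Au ≠ b, such that dist(u, {x : Ax = b, Cx ≤ d}) = H · ‖Au − b‖. -/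

import Mathlib

open Matrix Metric

/-- The set-valued mapping `[A,C,J] : x ↦ (Ax, Cx) + {(0,s) : s_J ≥ 0}` is
relatively surjective: its image is a linear subspace. -/
def RelSurjAC {m p n : ℕ} (A : Matrix (Fin m) (Fin n) ℝ)
    (C : Matrix (Fin p) (Fin n) ℝ) (J : Set (Fin p)) : Prop :=
  ∃ W : Submodule ℝ ((Fin m → ℝ) × (Fin p → ℝ)),
    {q : (Fin m → ℝ) × (Fin p → ℝ) | ∃ x : Fin n → ℝ, ∃ s : Fin p → ℝ,
      (∀ i ∈ J, 0 ≤ s i) ∧ q = (A.mulVec x, C.mulVec x + s)} =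
    (W : Set ((Fin m → ℝ) × (Fin p → ℝ)))

/-- `H_J = max_{y ∈ {Ax : C_J x ≤ 0}, ‖y‖≤1} min{‖x‖ : Ax = y, C_J x ≤ 0}`. -/
noncomputable def HJstd {m p n : ℕ} (A : Matrix (Fin m) (Fin n) ℝ)
    (C : Matrix (Fin p) (Fin n) ℝ) (J : Set (Fin p)) : ℝ :=
  sSup {t | ∃ y : Fin m → ℝ,
    (∃ x : Fin n → ℝ, (∀ i ∈ J, C.mulVec x i ≤ 0) ∧ y = A.mulVec x) ∧ ‖y‖ ≤ 1 ∧
    t = sInf {r | ∃ x : Fin n → ℝ, A.mulVec x = y ∧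
      (∀ i ∈ J, C.mulVec x i ≤ 0) ∧ r = ‖x‖}}

/-- `H = max_{J ∈ S(A;C)} H_J`. -/
noncomputable def HoffStd {m p n : ℕ} (A : Matrix (Fin m) (Fin n) ℝ)
    (C : Matrix (Fin p) (Fin n) ℝ) : ℝ :=
  sSup {t | ∃ J : Set (Fin p), RelSurjAC A C J ∧ t = HJstd A C J}

/-!
Homogeneous case first: if `{z | A z = y, C_J z ≤ 0}` is nonempty, it contains a point of norm at
most `H ‖y‖`. This goes by induction on `J`. If `[A,C,J]` is relatively surjective, it is the
definition of `H_J` after rescaling `y`. Otherwise Gordan's alternative gives weights `l ≥ 0` on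
`J` such that `lᵀ C_J` vanishes on `ker A`. By induction there are short solutions `z i` of the
systems with constraint `i` dropped; the matrix `M j i = (C z i) j` has nonpositive off-diagonal
entries and `lᵀ M ≤ 0`, which forces some convex combination of the `z i` to satisfy all of `J`.

For the inhomogeneous system, minimize the residual `‖A v - b‖` over the compact set of `v` with
`C v ≤ d` and `‖v - u‖ + H ‖A v - b‖ ≤ H ‖A u - b‖`. At a point with nonzero residual, a step along
a short homogeneous solution for the constraints active there would decrease the residual.

For tightness, `H = H_J` for some relatively surjective `J`, and the supremum defining `H_J` is
attained at some `y` with `‖y‖ = 1`, since the minimal norm is a Lipschitz function of `y` on the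
range of `A`. Take `b = y`, `u = 0`, and `d` vanishing on `J` and loose elsewhere.
-/

namespace Matrix

variable {ι κ μ : Type*} [Fintype ι] [Fintype κ]

theorem exists_forall_eq_dotProduct (f : StrongDual ℝ (κ → ℝ)) : ∃ x, ∀ w, f w = x ⬝ᵥ w := by
  classical
  exact ⟨(dotProductEquiv ℝ κ).symm f.toLinearMap, fun w => by
    rw [← dotProductEquiv_apply_apply, LinearEquiv.apply_symm_apply]; rfl⟩

/-- Gordan's alternative, relative to `ker A`. -/
theorem exists_mem_stdSimplex_vecMul_eq_of_not_exists_mulVec_neg [Fintype μ] (A : Matrix μ κ ℝ)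
    (C : Matrix ι κ ℝ) (h : ¬∃ x, A *ᵥ x = 0 ∧ ∀ i, (C *ᵥ x) i < 0) :
    ∃ l ∈ stdSimplex ℝ ι, ∃ ν, l ᵥ* C = ν ᵥ* A := by
  classical
  by_contra! hne
  set R := LinearMap.range (vecMulLinear A)
  have hdisj : Disjoint ((· ᵥ* C) '' stdSimplex ℝ ι) (R : Set (κ → ℝ)) := by
    rw [Set.disjoint_left]
    rintro _ ⟨l, hl, rfl⟩ ⟨ν, hν⟩
    exact hne l hl ν hν.symm
  obtain ⟨f, u, v, hfS, huv, hfR⟩ := geometric_hahn_banach_compact_closed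
    ((convex_stdSimplex ℝ ι).linear_image (vecMulLinear C))
    ((isCompact_stdSimplex ℝ ι).image (by fun_prop)) R.convex
    (Submodule.closed_of_finiteDimensional R) hdisj
  have hfR0 : ∀ b ∈ R, f b = 0 := by
    intro b hb
    by_contra hb0
    simpa [hb0] using hfR ((v / f b) • b) (R.smul_mem _ hb)
  obtain ⟨x, hx⟩ := exists_forall_eq_dotProduct f
  have hAx : A *ᵥ x = 0 := by
    have := hfR0 _ ⟨A *ᵥ x, rfl⟩
    rwa [hx, vecMulLinear_apply, dotProduct_comm, ← dotProduct_mulVec,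
      dotProduct_self_eq_zero] at this
  refine h ⟨x, hAx, fun i => ?_⟩
  have hi := hfS _ ⟨Pi.single i 1, single_mem_stdSimplex ℝ i, rfl⟩
  have h0 := hfR 0 R.zero_mem
  rw [hx, vecMulLinear_apply, dotProduct_comm, ← dotProduct_mulVec, single_one_dotProduct] at hi
  rw [map_zero] at h0
  linarith

/-- Ville's alternative. -/
theorem exists_mem_stdSimplex_mulVec_nonpos_or_exists_vecMul_pos (M : Matrix κ ι ℝ) :
    (∃ a ∈ stdSimplex ℝ ι, ∀ k, (M *ᵥ a) k ≤ 0) ∨ ∃ b, 0 ≤ b ∧ ∀ i, 0 < (b ᵥ* M) i := by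
  classical
  refine or_iff_not_imp_left.2 fun h => ?_
  have hdisj : Disjoint ((fun a => -(M *ᵥ a)) '' stdSimplex ℝ ι)
      (ProperCone.positive ℝ (κ → ℝ)) := by
    rw [Set.disjoint_left]
    rintro _ ⟨a, ha, rfl⟩ hpos
    exact h ⟨a, ha, fun k => by simpa using hpos k⟩
  obtain ⟨f, hfpos, hfK⟩ := (ProperCone.positive ℝ (κ → ℝ)).hyperplane_separation
    ((convex_stdSimplex ℝ ι).linear_image (-(mulVecLin M)))
    ((isCompact_stdSimplex ℝ ι).image (by fun_prop)) hdisj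
  obtain ⟨b, hb⟩ := exists_forall_eq_dotProduct f
  refine ⟨b, fun k => ?_, fun i => ?_⟩
  · simpa [hb] using hfpos (Pi.single k 1) (by simp [Pi.single_nonneg])
  · have := hfK _ ⟨Pi.single i 1, single_mem_stdSimplex ℝ i, rfl⟩
    rw [hb, LinearMap.neg_apply, mulVecLin_apply, dotProduct_neg, dotProduct_mulVec,
      dotProduct_single_one] at this
    linarith

theorem exists_mem_stdSimplex_mulVec_nonpos_of_offDiag_nonpos (M : Matrix ι ι ℝ)
    (hM : ∀ i j, i ≠ j → M i j ≤ 0) {l : ι → ℝ} (hl : l ∈ stdSimplex ℝ ι)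
    (hlM : ∀ j, (l ᵥ* M) j ≤ 0) : ∃ a ∈ stdSimplex ℝ ι, ∀ i, (M *ᵥ a) i ≤ 0 := by
  refine (exists_mem_stdSimplex_mulVec_nonpos_or_exists_vecMul_pos M).resolve_right ?_
  rintro ⟨b, hb, hbM⟩
  set s := Finset.univ.filter fun j => 0 < l j
  have hs : s.Nonempty := by
    obtain ⟨j, hj⟩ : ∃ j, 0 < l j := by
      by_contra! h0
      have := hl.2
      rw [Finset.sum_eq_zero fun j _ => le_antisymm (h0 j) (hl.1 j)] at this
      exact zero_ne_one this
    exact ⟨j, by simpa [s] using hj⟩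
  -- `ρ` is the largest scalar with `b - ρ • l ≥ 0`; the coordinate `i₀` of `b - ρ • l` vanishes
  obtain ⟨i₀, hi₀s, hi₀⟩ := s.exists_min_image (fun j => b j / l j) hs
  set ρ := b i₀ / l i₀
  have hli₀ : 0 < l i₀ := (Finset.mem_filter.1 hi₀s).2
  have hρ : 0 ≤ ρ := div_nonneg (hb i₀) hli₀.le
  have hc : ∀ j, 0 ≤ b j - ρ * l j := by
    intro j
    rcases (hl.1 j).eq_or_lt with h | h
    · rw [← h, mul_zero, sub_zero]; exact hb j
    · linarith [(le_div_iff₀ h).1 (hi₀ j (by simp [s, h]))]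
  have hci₀ : b i₀ - ρ * l i₀ = 0 := by simp [ρ, hli₀.ne']
  have key : ((b - ρ • l) ᵥ* M) i₀ ≤ 0 := by
    simp only [vecMul, dotProduct]
    refine Finset.sum_nonpos fun j _ => ?_
    by_cases hj : j = i₀
    · simp [hj, hci₀]
    · exact mul_nonpos_of_nonneg_of_nonpos (by simpa using hc j) (hM j i₀ hj)
  rw [sub_vecMul, smul_vecMul, Pi.sub_apply, Pi.smul_apply, smul_eq_mul] at key
  nlinarith [hbM i₀, hlM i₀]

end Matrix

section Hoffman

variable {m p n : ℕ} (A : Matrix (Fin m) (Fin n) ℝ) (C : Matrix (Fin p) (Fin n) ℝ)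

def feasibleSet (J : Set (Fin p)) (y : Fin m → ℝ) : Set (Fin n → ℝ) :=
  {x | A *ᵥ x = y ∧ ∀ i ∈ J, (C *ᵥ x) i ≤ 0}

noncomputable def minNorm (J : Set (Fin p)) (y : Fin m → ℝ) : ℝ :=
  sInf (norm '' feasibleSet A C J y)

variable {A C} {J : Set (Fin p)} {b y y' : Fin m → ℝ} {d : Fin p → ℝ} {x x' u v : Fin n → ℝ}

theorem zero_mem_feasibleSet : (0 : Fin n → ℝ) ∈ feasibleSet A C J 0 :=
  ⟨mulVec_zero A, fun i _ => by simp⟩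

theorem smul_mem_feasibleSet {c : ℝ} (hc : 0 ≤ c) (hx : x ∈ feasibleSet A C J y) :
    c • x ∈ feasibleSet A C J (c • y) :=
  ⟨by rw [mulVec_smul, hx.1], fun i hi => by
    simpa [mulVec_smul] using mul_nonpos_of_nonneg_of_nonpos hc (hx.2 i hi)⟩

theorem add_mem_feasibleSet (hx : x ∈ feasibleSet A C J y) (hx' : x' ∈ feasibleSet A C J y') :
    x + x' ∈ feasibleSet A C J (y + y') :=
  ⟨by rw [mulVec_add, hx.1, hx'.1], fun i hi => by
    simpa [mulVec_add] using add_nonpos (hx.2 i hi) (hx'.2 i hi)⟩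

theorem feasibleSet_anti {J' : Set (Fin p)} (hJ : J' ⊆ J) :
    feasibleSet A C J y ⊆ feasibleSet A C J' y :=
  fun _ hx => ⟨hx.1, fun i hi => hx.2 i (hJ hi)⟩

theorem isClosed_feasibleSet : IsClosed (feasibleSet A C J y) := by
  simp only [feasibleSet, Set.ofPred_and, Set.ofPred_forall]
  exact (isClosed_eq (by fun_prop) continuous_const).inter <|
    isClosed_iInter fun i => isClosed_iInter fun _ => isClosed_le (by fun_prop) continuous_const

theorem minNorm_nonneg : 0 ≤ minNorm A C J y :=
  Real.sInf_nonneg <| by rintro _ ⟨x, -, rfl⟩; exact norm_nonneg x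

theorem minNorm_le (hx : x ∈ feasibleSet A C J y) : minNorm A C J y ≤ ‖x‖ :=
  csInf_le ⟨0, by rintro _ ⟨x, -, rfl⟩; exact norm_nonneg x⟩ ⟨x, hx, rfl⟩

theorem exists_norm_eq_minNorm (hy : (feasibleSet A C J y).Nonempty) :
    ∃ x ∈ feasibleSet A C J y, ‖x‖ = minNorm A C J y := by
  obtain ⟨x, hx, hdist⟩ := isClosed_feasibleSet.exists_infDist_eq_dist hy 0
  refine ⟨x, hx, le_antisymm ?_ (minNorm_le hx)⟩
  refine le_csInf (hy.image _) ?_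
  rintro _ ⟨x', hx', rfl⟩
  rw [← dist_zero_left, ← dist_zero_left x', ← hdist]
  exact infDist_le_dist_of_mem hx'

theorem minNorm_zero : minNorm A C J 0 = 0 :=
  le_antisymm (by simpa using minNorm_le (zero_mem_feasibleSet (J := J))) minNorm_nonneg

theorem minNorm_smul_le {c : ℝ} (hc : 0 ≤ c) (hy : (feasibleSet A C J y).Nonempty) :
    minNorm A C J (c • y) ≤ c * minNorm A C J y := by
  obtain ⟨x, hx, hxn⟩ := exists_norm_eq_minNorm hy
  simpa [norm_smul, abs_of_nonneg hc, hxn] using minNorm_le (smul_mem_feasibleSet hc hx)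

theorem minNorm_le_norm_mul (hy : (feasibleSet A C J y).Nonempty) :
    minNorm A C J y ≤ ‖y‖ * minNorm A C J (‖y‖⁻¹ • y) := by
  rcases eq_or_ne y 0 with rfl | hy0
  · simp [minNorm_zero]
  obtain ⟨x, hx⟩ := hy
  simpa [smul_inv_smul₀ (norm_ne_zero_iff.2 hy0)] using
    minNorm_smul_le (norm_nonneg y) ⟨_, smul_mem_feasibleSet (inv_nonneg.2 (norm_nonneg y)) hx⟩

theorem minNorm_add_le (hy : (feasibleSet A C J y).Nonempty)
    (hy' : (feasibleSet A C J y').Nonempty) :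
    minNorm A C J (y + y') ≤ minNorm A C J y + minNorm A C J y' := by
  obtain ⟨x, hx, hxn⟩ := exists_norm_eq_minNorm hy
  obtain ⟨x', hx', hxn'⟩ := exists_norm_eq_minNorm hy'
  rw [← hxn, ← hxn']
  exact (minNorm_le (add_mem_feasibleSet hx hx')).trans (norm_add_le x x')

theorem relSurjAC_iff :
    RelSurjAC A C J ↔ ∃ x₀, A *ᵥ x₀ = 0 ∧ ∀ i ∈ J, (C *ᵥ x₀) i ≤ -1 := by
  constructor
  · rintro ⟨W, hW⟩
    have h1 : ((0 : Fin m → ℝ), (1 : Fin p → ℝ)) ∈ W := by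
      rw [← SetLike.mem_coe, ← hW]
      exact ⟨0, 1, fun _ _ => zero_le_one, by simp⟩
    have h2 := W.neg_mem h1
    rw [← SetLike.mem_coe, ← hW] at h2
    obtain ⟨x, s, hs, hq⟩ := h2
    simp only [Prod.neg_mk, neg_zero, Prod.mk.injEq] at hq
    refine ⟨x, hq.1.symm, fun i hi => ?_⟩
    have := congrFun hq.2 i
    simp only [Pi.neg_apply, Pi.one_apply, Pi.add_apply] at this
    linarith [hs i hi]
  · rintro ⟨x₀, hx₀, hC⟩
    refine ⟨{ carrier := {q | ∃ x s, (∀ i ∈ J, 0 ≤ s i) ∧ q = (A *ᵥ x, C *ᵥ x + s)}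
              zero_mem' := ⟨0, 0, fun _ _ => le_rfl, by simp; rfl⟩
              add_mem' := ?_
              smul_mem' := ?_ }, rfl⟩
    · rintro _ _ ⟨x, s, hs, rfl⟩ ⟨x', s', hs', rfl⟩
      refine ⟨x + x', s + s', fun i hi => add_nonneg (hs i hi) (hs' i hi), ?_⟩
      simp only [Prod.mk_add_mk, mulVec_add]
      abel_nf
    -- moving along the Slater direction `x₀` restores the sign constraints after scaling by `c`
    · rintro c _ ⟨x, s, hs, rfl⟩
      set t := |c| * ∑ j, |s j|
      refine ⟨c • x + t • x₀, c • s - t • (C *ᵥ x₀), fun i hi => ?_, ?_⟩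
      · have h1 : |s i| ≤ ∑ j, |s j| :=
          Finset.single_le_sum (f := fun j => |s j|) (fun j _ => abs_nonneg _) (Finset.mem_univ i)
        have h2 : -(|c| * |s i|) ≤ c * s i := by rw [← abs_mul]; exact neg_abs_le _
        have h3 : t ≤ -(t * (C *ᵥ x₀) i) := by nlinarith [hC i hi, show 0 ≤ t by positivity]
        simp only [Pi.sub_apply, Pi.smul_apply, smul_eq_mul]
        nlinarith [mul_le_mul_of_nonneg_left h1 (abs_nonneg c)]
      · simp only [Prod.smul_mk, mulVec_add, mulVec_smul, hx₀, smul_zero, add_zero, smul_add]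
        abel_nf

theorem relSurjAC_of_neg {x₀ : Fin n → ℝ} (hx₀ : A *ᵥ x₀ = 0) (hC : ∀ i ∈ J, (C *ᵥ x₀) i < 0) :
    RelSurjAC A C J := by
  -- scaling by `t ≥ 1 / |(C x₀)ᵢ|` for all `i`; a junk term `1 / 0 = 0` does no harm
  set t := ∑ j, 1 / |(C *ᵥ x₀) j|
  refine relSurjAC_iff.2 ⟨t • x₀, by rw [mulVec_smul, hx₀, smul_zero], fun i hi => ?_⟩
  have hneg := hC i hi
  have ht : 1 / |(C *ᵥ x₀) i| ≤ t :=
    Finset.single_le_sum (f := fun j => 1 / |(C *ᵥ x₀) j|) (fun j _ => by positivity)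
      (Finset.mem_univ i)
  rw [abs_of_neg hneg] at ht
  rw [mulVec_smul, Pi.smul_apply, smul_eq_mul]
  have : 1 / -(C *ᵥ x₀) i * (C *ᵥ x₀) i = -1 := by
    rw [div_mul_eq_mul_div, one_mul, div_neg, div_self hneg.ne]
  nlinarith

theorem relSurjAC_empty : RelSurjAC A C ∅ :=
  relSurjAC_iff.2 ⟨0, mulVec_zero A, by simp⟩

theorem hJstd_eq_sSup_minNorm : HJstd A C J =
    sSup (minNorm A C J '' {y | (feasibleSet A C J y).Nonempty ∧ ‖y‖ ≤ 1}) := by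
  have hset : ∀ y, {r | ∃ x, A *ᵥ x = y ∧ (∀ i ∈ J, (C *ᵥ x) i ≤ 0) ∧ r = ‖x‖} =
      norm '' feasibleSet A C J y := fun y => by
    ext r
    simp only [feasibleSet, Set.mem_image, Set.mem_ofPred_eq, and_assoc, eq_comm]
  unfold HJstd
  simp only [hset]
  congr 1
  ext t
  constructor
  · rintro ⟨_, ⟨x, hx, rfl⟩, hy, rfl⟩
    exact ⟨_, ⟨⟨x, rfl, hx⟩, hy⟩, rfl⟩
  · rintro ⟨_, ⟨⟨x, rfl, hx⟩, hy⟩, rfl⟩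
    exact ⟨_, ⟨x, hx, rfl⟩, hy, rfl⟩

theorem exists_mem_feasibleSet_norm_le_mul (h : RelSurjAC A C J) :
    ∃ M, 0 ≤ M ∧ ∀ w, ∃ x ∈ feasibleSet A C J (A *ᵥ w), ‖x‖ ≤ M * ‖A *ᵥ w‖ := by
  obtain ⟨x₀, hx₀, hC⟩ := relSurjAC_iff.1 h
  obtain ⟨K, hK, hKA⟩ := (mulVecLin A).rangeRestrict.toContinuousLinearMap.exists_preimage_norm_le
    (LinearMap.surjective_rangeRestrict _)
  set L := ‖(mulVecLin C).toContinuousLinearMap‖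
  refine ⟨K * (1 + L * ‖x₀‖), by positivity, fun w => ?_⟩
  obtain ⟨v, hv, hvn⟩ := hKA ⟨A *ᵥ w, w, rfl⟩
  have hAv : A *ᵥ v = A *ᵥ w := congrArg Subtype.val hv
  have hvn : ‖v‖ ≤ K * ‖A *ᵥ w‖ := hvn
  have hCv : ∀ i, (C *ᵥ v) i ≤ L * ‖v‖ := fun i =>
    (le_abs_self _).trans <| (norm_le_pi_norm (C *ᵥ v) i).trans <|
      (mulVecLin C).toContinuousLinearMap.le_opNorm v
  have hτ : 0 ≤ L * ‖v‖ := by positivity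
  refine ⟨v + (L * ‖v‖) • x₀, ⟨by rw [mulVec_add, mulVec_smul, hx₀, smul_zero, add_zero, hAv],
    fun i hi => ?_⟩, ?_⟩
  · rw [mulVec_add, mulVec_smul, Pi.add_apply, Pi.smul_apply, smul_eq_mul]
    nlinarith [hCv i, hC i hi]
  · calc ‖v + (L * ‖v‖) • x₀‖ ≤ ‖v‖ + L * ‖v‖ * ‖x₀‖ :=
          (norm_add_le _ _).trans_eq (by rw [norm_smul, Real.norm_of_nonneg hτ])
      _ = (1 + L * ‖x₀‖) * ‖v‖ := by ring
      _ ≤ (1 + L * ‖x₀‖) * (K * ‖A *ᵥ w‖) := by gcongr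
      _ = K * (1 + L * ‖x₀‖) * ‖A *ᵥ w‖ := by ring

theorem bddAbove_minNorm_image (h : RelSurjAC A C J) :
    BddAbove (minNorm A C J '' {y | (feasibleSet A C J y).Nonempty ∧ ‖y‖ ≤ 1}) := by
  obtain ⟨M, hM, hMA⟩ := exists_mem_feasibleSet_norm_le_mul h
  refine ⟨M, ?_⟩
  rintro _ ⟨y, ⟨⟨x, hx⟩, hy⟩, rfl⟩
  obtain ⟨x', hx', hx'n⟩ := hMA x
  rw [hx.1] at hx' hx'n
  calc minNorm A C J y ≤ M * ‖y‖ := (minNorm_le hx').trans hx'n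
    _ ≤ M := mul_le_of_le_one_right hM hy

theorem minNorm_le_hJstd (h : RelSurjAC A C J)
    (hy : (feasibleSet A C J y).Nonempty) (hy1 : ‖y‖ ≤ 1) : minNorm A C J y ≤ HJstd A C J :=
  hJstd_eq_sSup_minNorm (A := A) ▸ le_csSup (bddAbove_minNorm_image h) ⟨y, ⟨hy, hy1⟩, rfl⟩

theorem hJstd_nonneg (h : RelSurjAC A C J) : 0 ≤ HJstd A C J :=
  minNorm_zero.ge.trans (minNorm_le_hJstd h ⟨0, zero_mem_feasibleSet⟩ (by simp))

theorem finite_hJstd_relSurjAC :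
    {t | ∃ J : Set (Fin p), RelSurjAC A C J ∧ t = HJstd A C J}.Finite :=
  (Set.finite_range (HJstd A C)).subset fun _ ⟨J, _, hJ⟩ => ⟨J, hJ.symm⟩

theorem hJstd_le_hoffStd (h : RelSurjAC A C J) : HJstd A C J ≤ HoffStd A C :=
  le_csSup finite_hJstd_relSurjAC.bddAbove ⟨J, h, rfl⟩

theorem hoffStd_nonneg : 0 ≤ HoffStd A C :=
  (hJstd_nonneg relSurjAC_empty).trans (hJstd_le_hoffStd relSurjAC_empty)

theorem exists_relSurjAC_hoffStd_eq : ∃ J, RelSurjAC A C J ∧ HoffStd A C = HJstd A C J :=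
  Set.Nonempty.csSup_mem (s := {t | ∃ J, RelSurjAC A C J ∧ t = HJstd A C J})
    ⟨_, ∅, relSurjAC_empty, rfl⟩ finite_hJstd_relSurjAC

theorem exists_mem_feasibleSet_norm_le_hJstd (h : RelSurjAC A C J)
    (hy : (feasibleSet A C J y).Nonempty) :
    ∃ z ∈ feasibleSet A C J y, ‖z‖ ≤ HJstd A C J * ‖y‖ := by
  obtain ⟨z, hz, hzn⟩ := exists_norm_eq_minNorm hy
  have hŷ : ‖‖y‖⁻¹ • y‖ ≤ 1 := by
    rw [norm_smul, norm_inv, norm_norm]; exact inv_mul_le_one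
  refine ⟨z, hz, ?_⟩
  calc ‖z‖ = minNorm A C J y := hzn
    _ ≤ ‖y‖ * minNorm A C J (‖y‖⁻¹ • y) := minNorm_le_norm_mul hy
    _ ≤ ‖y‖ * HJstd A C J := by
        gcongr
        exact minNorm_le_hJstd h ⟨_, smul_mem_feasibleSet (by positivity) hz⟩ hŷ
    _ = HJstd A C J * ‖y‖ := mul_comm _ _

theorem exists_mem_feasibleSet_norm_le_hoffStd (J : Finset (Fin p))
    (hy : (feasibleSet A C J y).Nonempty) :
    ∃ z ∈ feasibleSet A C J y, ‖z‖ ≤ HoffStd A C * ‖y‖ := by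
  induction J using Finset.strongInduction with
  | H J ih =>
  by_cases hJ : RelSurjAC A C J
  · obtain ⟨z, hz, hzn⟩ := exists_mem_feasibleSet_norm_le_hJstd hJ hy
    exact ⟨z, hz, hzn.trans (by gcongr; exact hJstd_le_hoffStd hJ)⟩
  set CJ := C.submatrix ((↑) : J → Fin p) id
  obtain ⟨l, hl, ν, hlν⟩ := exists_mem_stdSimplex_vecMul_eq_of_not_exists_mulVec_neg A CJ
    fun ⟨x, hx, hneg⟩ => hJ (relSurjAC_of_neg hx fun i hi => hneg ⟨i, hi⟩)
  have hlC : ∀ x, A *ᵥ x = y → l ⬝ᵥ (CJ *ᵥ x) = ν ⬝ᵥ y := fun x hx => by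
    rw [dotProduct_mulVec, hlν, ← dotProduct_mulVec, hx]
  have hsub : ∀ i : J, ∃ z ∈ feasibleSet A C (J.erase i) y, ‖z‖ ≤ HoffStd A C * ‖y‖ :=
    fun i => ih _ (Finset.erase_ssubset i.2)
      (hy.mono (feasibleSet_anti (by simp)))
  choose z hz hzn using hsub
  obtain ⟨x, hx⟩ := hy
  set M : Matrix J J ℝ := Matrix.of fun j i => (C *ᵥ z i) j
  have hM : ∀ j i, j ≠ i → M j i ≤ 0 := fun j i hji =>
    (hz i).2 j (by simp [Subtype.val_injective.ne hji])
  have hlM : ∀ i, (l ᵥ* M) i ≤ 0 := fun i => by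
    change l ⬝ᵥ (CJ *ᵥ z i) ≤ 0
    rw [hlC _ (hz i).1, ← hlC x hx.1]
    exact Finset.sum_nonpos fun j _ => mul_nonpos_of_nonneg_of_nonpos (hl.1 j) (hx.2 j j.2)
  obtain ⟨a, ha, haM⟩ := exists_mem_stdSimplex_mulVec_nonpos_of_offDiag_nonpos M hM hl hlM
  refine ⟨∑ i, a i • z i, ⟨?_, fun j hj => ?_⟩, ?_⟩
  · simp only [mulVec_sum, mulVec_smul, (hz _).1, ← Finset.sum_smul, ha.2, one_smul]
  · calc (C *ᵥ ∑ i, a i • z i) j = (M *ᵥ a) ⟨j, hj⟩ := by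
          rw [mulVec_sum, Finset.sum_apply]
          exact Finset.sum_congr rfl fun i _ => by simp [M, mulVec_smul, mul_comm]
      _ ≤ 0 := haM _
  · simpa using (convex_closedBall (0 : Fin n → ℝ) (HoffStd A C * ‖y‖)).sum_mem
      (fun i _ => ha.1 i) ha.2 fun i _ => by simpa using hzn i

theorem exists_step_decreasing_residual
    (hx : A *ᵥ x = b ∧ ∀ i, (C *ᵥ x) i ≤ d i) (hv : ∀ i, (C *ᵥ v) i ≤ d i)
    (hvb : A *ᵥ v ≠ b) :
    ∃ v', (∀ i, (C *ᵥ v') i ≤ d i) ∧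
      ‖v' - v‖ + HoffStd A C * ‖A *ᵥ v' - b‖ ≤ HoffStd A C * ‖A *ᵥ v - b‖ ∧
      ‖A *ᵥ v' - b‖ < ‖A *ᵥ v - b‖ := by
  classical
  set J := Finset.univ.filter fun i => (C *ᵥ v) i = d i
  obtain ⟨z, hz, hzn⟩ := exists_mem_feasibleSet_norm_le_hoffStd (A := A) (C := C) J
    (y := b - A *ᵥ v) ⟨x - v, by rw [mulVec_sub, hx.1], fun i hi => by
      simp only [J, Finset.coe_filter, Finset.mem_univ, true_and, Set.mem_ofPred_eq] at hi
      rw [mulVec_sub, Pi.sub_apply, hi]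
      linarith [hx.2 i]⟩
  -- a short step along `z` keeps the slack constraints and cannot break the tight ones
  have hev : ∀ᶠ t in nhdsWithin (0 : ℝ) (Set.Ioi 0), ∀ i, (C *ᵥ (v + t • z)) i ≤ d i := by
    refine Filter.eventually_all.2 fun i => ?_
    simp only [mulVec_add, mulVec_smul, Pi.add_apply, Pi.smul_apply, smul_eq_mul]
    rcases (hv i).eq_or_lt with h | h
    · filter_upwards [self_mem_nhdsWithin] with t (ht : 0 < t)
      nlinarith [hz.2 i (by simp [J, h])]
    · exact nhdsWithin_le_nhds <| (ContinuousAt.eventually_lt (by fun_prop) continuousAt_const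
        (by simpa using h)).mono fun _ h => h.le
  obtain ⟨t, hCt, ht⟩ := (hev.and (Ioo_mem_nhdsGT zero_lt_one)).exists
  have hres : ‖A *ᵥ (v + t • z) - b‖ = (1 - t) * ‖A *ᵥ v - b‖ := by
    rw [mulVec_add, mulVec_smul, hz.1, ← Real.norm_of_nonneg (sub_nonneg.2 ht.2.le), ← norm_smul]
    congr 1
    module
  have hstep : ‖v + t • z - v‖ ≤ t * (HoffStd A C * ‖A *ᵥ v - b‖) := by
    rw [add_sub_cancel_left, norm_smul, Real.norm_of_nonneg ht.1.le, norm_sub_rev]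
    exact mul_le_mul_of_nonneg_left hzn ht.1.le
  have hr : 0 < ‖A *ᵥ v - b‖ := norm_pos_iff.2 (sub_ne_zero.2 hvb)
  refine ⟨v + t • z, hCt, ?_, ?_⟩ <;> rw [hres]
  · linarith
  · nlinarith [ht.1]

theorem infDist_le_hoffStd_mul
    (hK : {x : Fin n → ℝ | A *ᵥ x = b ∧ ∀ i, (C *ᵥ x) i ≤ d i}.Nonempty)
    (hu : ∀ i, (C *ᵥ u) i ≤ d i) :
    infDist u {x : Fin n → ℝ | A *ᵥ x = b ∧ ∀ i, (C *ᵥ x) i ≤ d i} ≤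
      HoffStd A C * ‖A *ᵥ u - b‖ := by
  obtain ⟨x, hx⟩ := hK
  set H := HoffStd A C
  set G := {v | (∀ i, (C *ᵥ v) i ≤ d i) ∧ ‖v - u‖ + H * ‖A *ᵥ v - b‖ ≤ H * ‖A *ᵥ u - b‖}
  have hGc : IsCompact G := by
    refine (isCompact_closedBall u (H * ‖A *ᵥ u - b‖)).of_isClosed_subset ?_ fun v hv => ?_
    · simp only [G, Set.ofPred_and, Set.ofPred_forall]
      exact (isClosed_iInter fun i => isClosed_le (by fun_prop) continuous_const).inter
        (isClosed_le (by fun_prop) continuous_const)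
    · rw [mem_closedBall, dist_eq_norm]
      nlinarith [hv.2, hoffStd_nonneg (A := A) (C := C), norm_nonneg (A *ᵥ v - b)]
  obtain ⟨w, hwG, hwmin⟩ := hGc.exists_isMinOn (⟨u, hu, by simp⟩ : G.Nonempty)
    (by fun_prop : Continuous fun v => ‖A *ᵥ v - b‖).continuousOn
  have hwb : A *ᵥ w = b := by
    by_contra hne
    obtain ⟨w', hw'C, hw', hlt⟩ := exists_step_decreasing_residual hx hwG.1 hne
    have hw'G : w' ∈ G :=
      ⟨hw'C, by linarith [norm_sub_le_norm_sub_add_norm_sub w' w u, hwG.2]⟩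
    exact (isMinOn_iff.1 hwmin w' hw'G).not_gt hlt
  have hwK : w ∈ {x : Fin n → ℝ | A *ᵥ x = b ∧ ∀ i, (C *ᵥ x) i ≤ d i} := ⟨hwb, hwG.1⟩
  calc _ ≤ dist u w := infDist_le_dist_of_mem hwK
    _ = ‖w - u‖ := by rw [dist_comm, dist_eq_norm]
    _ ≤ H * ‖A *ᵥ u - b‖ := by simpa [hwb] using hwG.2

theorem exists_minNorm_eq_hJstd (h : RelSurjAC A C J) :
    ∃ y, (feasibleSet A C J y).Nonempty ∧ ‖y‖ ≤ 1 ∧ minNorm A C J y = HJstd A C J := by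
  obtain ⟨M, hM, hMA⟩ := exists_mem_feasibleSet_norm_le_mul h
  set R := LinearMap.range (mulVecLin A)
  have hR : ∀ y ∈ R, (feasibleSet A C J y).Nonempty ∧ minNorm A C J y ≤ M * ‖y‖ := by
    rintro _ ⟨w, rfl⟩
    obtain ⟨x, hx, hxn⟩ := hMA w
    exact ⟨⟨x, hx⟩, (minNorm_le hx).trans hxn⟩
  have hD : {y | (feasibleSet A C J y).Nonempty ∧ ‖y‖ ≤ 1} = (R : Set _) ∩ closedBall 0 1 := by
    ext y
    constructor
    · rintro ⟨⟨x, hx⟩, hy⟩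
      exact ⟨⟨x, hx.1⟩, mem_closedBall_zero_iff.2 hy⟩
    · rintro ⟨hyR, hy⟩
      exact ⟨(hR y hyR).1, mem_closedBall_zero_iff.1 hy⟩
  have hle : ∀ y₁ ∈ R, ∀ y₂ ∈ R, minNorm A C J y₁ ≤ minNorm A C J y₂ + M * ‖y₁ - y₂‖ := by
    intro y₁ h₁ y₂ h₂
    have := minNorm_add_le (hR y₂ h₂).1 (hR _ (R.sub_mem h₁ h₂)).1
    rw [add_sub_cancel] at this
    linarith [(hR _ (R.sub_mem h₁ h₂)).2]
  have hlip : LipschitzOnWith M.toNNReal (minNorm A C J) R :=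
    LipschitzOnWith.of_dist_le_mul fun y₁ h₁ y₂ h₂ => by
      rw [Real.dist_eq, dist_eq_norm, Real.coe_toNNReal _ hM, abs_sub_le_iff]
      constructor
      · linarith [hle y₁ h₁ y₂ h₂]
      · linarith [norm_sub_rev y₁ y₂ ▸ hle y₂ h₂ y₁ h₁]
  obtain ⟨y, hyD, hymax⟩ := ((isCompact_closedBall 0 1).inter_left
    R.closed_of_finiteDimensional).exists_isMaxOn ⟨0, R.zero_mem, by simp⟩
    (hlip.continuousOn.mono Set.inter_subset_left)
  rw [← hD] at hyD hymax
  refine ⟨y, hyD.1, hyD.2, ?_⟩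
  rw [hJstd_eq_sSup_minNorm]
  refine Eq.symm (IsGreatest.csSup_eq ⟨⟨y, hyD, rfl⟩, ?_⟩)
  rintro _ ⟨y', hy', rfl⟩
  exact hymax hy'

theorem exists_norm_eq_one_minNorm_eq_hJstd (h : RelSurjAC A C J) (hpos : 0 < HJstd A C J) :
    ∃ y, (feasibleSet A C J y).Nonempty ∧ ‖y‖ = 1 ∧ minNorm A C J y = HJstd A C J := by
  obtain ⟨y, ⟨x, hx⟩, hy1, hyH⟩ := exists_minNorm_eq_hJstd h
  have hy0 : y ≠ 0 := by
    rintro rfl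
    rw [minNorm_zero] at hyH
    linarith
  have hŷ1 : ‖‖y‖⁻¹ • y‖ = 1 := by
    rw [norm_smul, norm_inv, norm_norm, inv_mul_cancel₀ (norm_ne_zero_iff.2 hy0)]
  have hŷ : (feasibleSet A C J (‖y‖⁻¹ • y)).Nonempty :=
    ⟨_, smul_mem_feasibleSet (by positivity) hx⟩
  refine ⟨_, hŷ, hŷ1, le_antisymm (minNorm_le_hJstd h hŷ hŷ1.le) ?_⟩
  calc HJstd A C J = minNorm A C J y := hyH.symm
    _ ≤ ‖y‖ * minNorm A C J (‖y‖⁻¹ • y) := minNorm_le_norm_mul ⟨x, hx⟩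
    _ ≤ minNorm A C J (‖y‖⁻¹ • y) := mul_le_of_le_one_left minNorm_nonneg hy1

theorem exists_infDist_eq_hoffStd_mul (hH : 0 < HoffStd A C) :
    ∃ b : Fin m → ℝ, ∃ d : Fin p → ℝ,
      {x : Fin n → ℝ | A *ᵥ x = b ∧ ∀ i, (C *ᵥ x) i ≤ d i}.Nonempty ∧
      ∃ u : Fin n → ℝ, (∀ i, (C *ᵥ u) i ≤ d i) ∧ A *ᵥ u ≠ b ∧
        infDist u {x : Fin n → ℝ | A *ᵥ x = b ∧ ∀ i, (C *ᵥ x) i ≤ d i} =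
          HoffStd A C * ‖A *ᵥ u - b‖ := by
  classical
  obtain ⟨J, hJ, hHJ⟩ := exists_relSurjAC_hoffStd_eq (A := A) (C := C)
  obtain ⟨y, hy, hy1, hyH⟩ := exists_norm_eq_one_minNorm_eq_hJstd hJ (hHJ ▸ hH)
  obtain ⟨x, hx, hxn⟩ := exists_norm_eq_minNorm hy
  set d : Fin p → ℝ := fun i => if i ∈ J then 0 else max ((C *ᵥ x) i) 0
  set K := {x' : Fin n → ℝ | A *ᵥ x' = y ∧ ∀ i, (C *ᵥ x') i ≤ d i}
  have hKJ : K ⊆ feasibleSet A C J y := fun x' hx' =>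
    ⟨hx'.1, fun i hi => by simpa [d, hi] using hx'.2 i⟩
  have hxK : x ∈ K := ⟨hx.1, fun i => by by_cases hi : i ∈ J <;> simp [d, hi, hx.2 i]⟩
  refine ⟨y, d, ⟨x, hxK⟩, 0, fun i => by by_cases hi : i ∈ J <;> simp [d, hi], ?_, ?_⟩
  · rw [mulVec_zero]
    rintro rfl
    simp at hy1
  · rw [mulVec_zero, zero_sub, norm_neg, hy1, mul_one, hHJ, ← hyH]
    refine le_antisymm ((infDist_le_dist_of_mem hxK).trans_eq (by rw [dist_zero_left, hxn]))
      ((le_infDist ⟨x, hxK⟩).2 fun x' hx' => ?_)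
    rw [dist_zero_left]
    exact minNorm_le (hKJ hx')

end Hoffman

/-- Proposition 6: with easy inequalities; for all `b, d` with
`{x : Ax = b, Cx ≤ d} ≠ ∅` and all `u` with `Cu ≤ d`,
`dist(u, {x : Ax = b, Cx ≤ d}) ≤ H·‖Au − b‖`, and the bound is tight. -/
theorem hoffman_easy_ineq {m p n : ℕ} (A : Matrix (Fin m) (Fin n) ℝ)
    (C : Matrix (Fin p) (Fin n) ℝ) :
    (∀ b : Fin m → ℝ, ∀ d : Fin p → ℝ,
      {x : Fin n → ℝ | A.mulVec x = b ∧ ∀ i, C.mulVec x i ≤ d i}.Nonempty →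
      ∀ u : Fin n → ℝ, (∀ i, C.mulVec u i ≤ d i) →
        infDist u {x : Fin n → ℝ | A.mulVec x = b ∧ ∀ i, C.mulVec x i ≤ d i} ≤
          HoffStd A C * ‖A.mulVec u - b‖) ∧
    (0 < HoffStd A C →
      ∃ b : Fin m → ℝ, ∃ d : Fin p → ℝ,
        {x : Fin n → ℝ | A.mulVec x = b ∧ ∀ i, C.mulVec x i ≤ d i}.Nonempty ∧
        ∃ u : Fin n → ℝ, (∀ i, C.mulVec u i ≤ d i) ∧ A.mulVec u ≠ b ∧
          infDist u {x : Fin n → ℝ | A.mulVec x = b ∧ ∀ i, C.mulVec x i ≤ d i} =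
            HoffStd A C * ‖A.mulVec u - b‖) :=
  ⟨fun _ _ hK _ hu => infDist_le_hoffStd_mul hK hu, exists_infDist_eq_hoffStd_mul⟩
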